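/- Let ω₁, ω₂ ∈ ℂ be linearly independent over ℝ, and let Λ = {a·ω₁ + b·ω₂ : a, b ∈ ℤ} be the lattice they generate. Let F : ℂ → ℂ be an entire function such that F(w + λ) − F(w) ∈ Λ for every w ∈ ℂ and every λ ∈ Λ. Then there exist α, β ∈ ℂ such that F(w) = α·w + β for all w ∈ ℂ, and α·λ ∈ Λ for every λ ∈ Λ. -/

import Mathlib

/-!
For each lattice vector `λ`, the increment `w ↦ F (w + λ) - F w` is a continuous map from the
connected plane into the discrete set `Λ`, hence constant. So `F'` is doubly periodic; being
entire it is bounded, hence constant by Liouville, and `F` is affine. Finally the constant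
increment `F λ - F 0 = α λ` lies in `Λ`.
-/

open Function

theorem eq_smul_add_of_deriv_eq {𝕜 G : Type*} [RCLike 𝕜] [NormedAddCommGroup G]
    [NormedSpace 𝕜 G] {f : 𝕜 → G} {a : G} (hf : Differentiable 𝕜 f) (hf' : ∀ x, deriv f x = a)
    (x : 𝕜) : f x = x • a + f 0 := by
  have hg : Differentiable 𝕜 fun x : 𝕜 => f x - x • a := hf.sub (differentiable_id.smul_const a)
  have hg' : ∀ x, deriv (fun x : 𝕜 => f x - x • a) x = 0 := fun x => by
    rw [deriv_fun_sub (hf x) (differentiableAt_fun_id.smul_const a),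
      deriv_smul_const differentiableAt_fun_id, deriv_id'', one_smul, hf', sub_self]
  have := is_const_of_deriv_eq_zero hg hg' x 0
  rw [zero_smul, sub_zero] at this
  rw [← this, add_sub_cancel]

theorem periodic_deriv_of_add_eq_add {𝕜 G : Type*} [NontriviallyNormedField 𝕜]
    [NormedAddCommGroup G] [NormedSpace 𝕜 G] {f : 𝕜 → G} {p : 𝕜} {c : G}
    (h : ∀ x, f (x + p) = f x + c) : Periodic (deriv f) p := fun x => by
  rw [← deriv_comp_add_const, funext h, deriv_add_const]

namespace PeriodPair

variable (L : PeriodPair)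

theorem isDiscrete_lattice : IsDiscrete (L.lattice : Set ℂ) :=
  isDiscrete_iff_discreteTopology.mpr (inferInstanceAs (DiscreteTopology L.lattice))

theorem apply_eq_apply_of_periodic {E : Type*} [NormedAddCommGroup E] [NormedSpace ℂ E]
    {f : ℂ → E} (hf : Differentiable ℂ f) (hper : ∀ l ∈ L.lattice, Periodic f l) (z w : ℂ) :
    f z = f w :=
  hf.apply_eq_apply_of_bounded (IsZLattice.isCompact_range_of_periodic L.lattice f hf.continuous
    fun z l hl => hper l hl z).isBounded z w

theorem add_eq_add_sub_of_forall_add_sub_mem {F : ℂ → ℂ} (hF : Continuous F)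
    (hper : ∀ w, ∀ l ∈ L.lattice, F (w + l) - F w ∈ L.lattice) {l : ℂ} (hl : l ∈ L.lattice)
    (w : ℂ) : F (w + l) = F w + (F l - F 0) := by
  have := isPreconnected_univ.constant_of_mapsTo L.isDiscrete_lattice
    (hF.comp (continuous_add_const l) |>.sub hF).continuousOn (fun w _ => hper w l hl)
    (Set.mem_univ w) (Set.mem_univ 0)
  simp only [Pi.sub_apply, comp_apply, zero_add] at this
  rw [← this, add_sub_cancel]

end PeriodPair

/-- an entire function whose increments along a lattice `Λ = ℤω₁ + ℤω₂` lie
in `Λ` is affine-linear `w ↦ αw + β` with `αΛ ⊆ Λ`. -/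
theorem stmt_14 (ω₁ ω₂ : ℂ)
    (hindep : ∀ s t : ℝ, (s : ℂ) * ω₁ + (t : ℂ) * ω₂ = 0 → s = 0 ∧ t = 0)
    (F : ℂ → ℂ) (hF : Differentiable ℂ F)
    (hper : ∀ w : ℂ,
      ∀ lam ∈ {z : ℂ | ∃ a b : ℤ, z = (a : ℂ) * ω₁ + (b : ℂ) * ω₂},
        F (w + lam) - F w ∈ {z : ℂ | ∃ a b : ℤ, z = (a : ℂ) * ω₁ + (b : ℂ) * ω₂}) :
    ∃ α β : ℂ, (∀ w : ℂ, F w = α * w + β) ∧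
      ∀ lam ∈ {z : ℂ | ∃ a b : ℤ, z = (a : ℂ) * ω₁ + (b : ℂ) * ω₂},
        α * lam ∈ {z : ℂ | ∃ a b : ℤ, z = (a : ℂ) * ω₁ + (b : ℂ) * ω₂} := by
  let L : PeriodPair := ⟨ω₁, ω₂, LinearIndependent.pair_iff.mpr fun s t h =>
    hindep s t (by simpa only [Complex.real_smul] using h)⟩
  have hΛ : {z : ℂ | ∃ a b : ℤ, z = (a : ℂ) * ω₁ + (b : ℂ) * ω₂} = L.lattice := by
    ext z
    simp only [Set.mem_ofPred_eq, SetLike.mem_coe, PeriodPair.mem_lattice, eq_comm]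
    rfl
  rw [hΛ] at hper ⊢
  have hderiv : ∀ w, deriv F w = deriv F 0 := fun w =>
    L.apply_eq_apply_of_periodic hF.deriv (fun l hl => periodic_deriv_of_add_eq_add
      (L.add_eq_add_sub_of_forall_add_sub_mem hF.continuous hper hl)) w 0
  have haffine : ∀ w, F w = deriv F 0 * w + F 0 := fun w => by
    rw [eq_smul_add_of_deriv_eq hF hderiv w, smul_eq_mul, mul_comm]
  refine ⟨deriv F 0, F 0, haffine, fun l hl => ?_⟩
  have h := hper 0 l hl
  rwa [zero_add, haffine l, add_sub_cancel_right] at h
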